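/- For every ū ∈ Uad, the weak first subderivative of the indicator function δ_{Uad} of Uad satisfies δ_{Uad}^↓(ū;v) = 0 if v ∈ T_{Uad}(ū) and δ_{Uad}^↓(ū;v) = +∞ otherwise; moreover, for G₁ := δ_{Uad} + μ j₁ one has G₁^↓(ū;v) = μ j₁'(ū;v) for v ∈ T_{Uad}(ū) and G₁^↓(ū;v) = +∞ for v ∉ T_{Uad}(ū). -/

import Mathlib

open MeasureTheory Filter Topology

noncomputable section

/-- The measure on `Ω_T = Ω × (0,T)`: Lebesgue measure restricted to `Ω ×ˢ (0,T)`. -/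
def OmT (d : ℕ) (Ω : Set (Fin d → ℝ)) (T : ℝ) : Measure ((Fin d → ℝ) × ℝ) :=
  volume.restrict (Ω ×ˢ Set.Ioo 0 T)

/-- The admissible set `Uad = { u ∈ L²(Ω_T) : α ≤ u ≤ β a.e. }`. -/
def Uad (d : ℕ) (Ω : Set (Fin d → ℝ)) (T α β : ℝ) : Set (Lp ℝ 2 (OmT d Ω T)) :=
  { u | ∀ᵐ p ∂(OmT d Ω T), α ≤ u p ∧ u p ≤ β }

open Classical in
/-- The indicator function (in the sense of convex analysis) of `Uad`. -/
def indUad (d : ℕ) (Ω : Set (Fin d → ℝ)) (T α β : ℝ) :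
    Lp ℝ 2 (OmT d Ω T) → EReal :=
  fun u => if u ∈ Uad d Ω T α β then 0 else ⊤

/-- The tangent cone `T_{Uad}(ū)`. -/
def TanCone (d : ℕ) (Ω : Set (Fin d → ℝ)) (T α β : ℝ) (ub : Lp ℝ 2 (OmT d Ω T)) :
    Set (Lp ℝ 2 (OmT d Ω T)) :=
  { v | ∀ᵐ p ∂(OmT d Ω T), (ub p = α → 0 ≤ v p) ∧ (ub p = β → v p ≤ 0) }

/-- Weak convergence in the Hilbert space `L²(Ω_T)`. -/
def WConv (d : ℕ) (Ω : Set (Fin d → ℝ)) (T : ℝ)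
    (v : ℕ → Lp ℝ 2 (OmT d Ω T)) (h : Lp ℝ 2 (OmT d Ω T)) : Prop :=
  ∀ w : Lp ℝ 2 (OmT d Ω T),
    Tendsto (fun k => (inner ℝ (v k) w : ℝ)) atTop (𝓝 (inner ℝ h w : ℝ))

/-- The weak first subderivative `G^↓(ū; v)` in `L²(Ω_T)`. -/
def wfs (d : ℕ) (Ω : Set (Fin d → ℝ)) (T : ℝ)
    (G : Lp ℝ 2 (OmT d Ω T) → EReal) (x h : Lp ℝ 2 (OmT d Ω T)) : EReal :=
  sInf { L : EReal | ∃ (t : ℕ → ℝ) (v : ℕ → Lp ℝ 2 (OmT d Ω T)),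
    (∀ k, 0 < t k) ∧ Tendsto t atTop (𝓝 0) ∧ WConv d Ω T v h ∧
    L = liminf (fun k => (((t k)⁻¹ : ℝ) : EReal) * (G (x + t k • v k) - G x)) atTop }

/-- The weak second subderivative `G''(ū, w; v)` in `L²(Ω_T)`. -/
def ssub (d : ℕ) (Ω : Set (Fin d → ℝ)) (T : ℝ)
    (G : Lp ℝ 2 (OmT d Ω T) → EReal) (x w h : Lp ℝ 2 (OmT d Ω T)) : EReal :=
  sInf { L : EReal | ∃ (t : ℕ → ℝ) (v : ℕ → Lp ℝ 2 (OmT d Ω T)),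
    (∀ k, 0 < t k) ∧ Tendsto t atTop (𝓝 0) ∧ WConv d Ω T v h ∧
    L = liminf (fun k =>
      ((2 / (t k) ^ 2 : ℝ) : EReal) *
        (G (x + t k • v k) - G x - ((t k * (inner ℝ w (v k) : ℝ) : ℝ) : EReal))) atTop }

/-- `G` is strongly twice epi-differentiable at `ū` for `w`. -/
def STED (d : ℕ) (Ω : Set (Fin d → ℝ)) (T : ℝ)
    (G : Lp ℝ 2 (OmT d Ω T) → EReal) (x w : Lp ℝ 2 (OmT d Ω T)) : Prop :=
  ∀ h : Lp ℝ 2 (OmT d Ω T), ∀ t : ℕ → ℝ, (∀ k, 0 < t k) → Tendsto t atTop (𝓝 0) →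
    ∃ v : ℕ → Lp ℝ 2 (OmT d Ω T), Tendsto v atTop (𝓝 h) ∧
      Tendsto (fun k =>
        ((2 / (t k) ^ 2 : ℝ) : EReal) *
          (G (x + t k • v k) - G x - ((t k * (inner ℝ w (v k) : ℝ) : ℝ) : EReal))) atTop
        (𝓝 (ssub d Ω T G x w h))

/-- `j₁(u) = ∫_{Ω_T} |u|`. -/
def j1 (d : ℕ) (Ω : Set (Fin d → ℝ)) (T : ℝ) (u : Lp ℝ 2 (OmT d Ω T)) : ℝ :=
  ∫ p, |u p| ∂(OmT d Ω T)

/-- The directional derivative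
`j₁'(ū; v) = ∫_{ū>0} v - ∫_{ū<0} v + ∫_{ū=0} |v|`. -/
def j1' (d : ℕ) (Ω : Set (Fin d → ℝ)) (T : ℝ) (ub v : Lp ℝ 2 (OmT d Ω T)) : ℝ :=
  ∫ p, (if 0 < ub p then v p else if ub p < 0 then -v p else |v p|) ∂(OmT d Ω T)

namespace Stmt15Aux

/-! ### Pure real auxiliary lemmas -/

lemma clamp_abs_le {b lo hi : ℝ} (h1 : lo ≤ 0) (h2 : 0 ≤ hi) :
    |max lo (min b hi)| ≤ |b| := by
  rw [abs_le]
  constructor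
  · exact le_max_of_le_right (le_min (neg_abs_le b) ((neg_nonpos.mpr (abs_nonneg b)).trans h2))
  · exact max_le (h1.trans (abs_nonneg b)) ((min_le_left _ _).trans (le_abs_self b))

lemma clamp_mem {α β a b t : ℝ} (ht : 0 < t) (hαβ : α ≤ β) (ha : α ≤ a) (hb : a ≤ β) :
    α ≤ a + t * max ((α - a)/t) (min b ((β - a)/t)) ∧
      a + t * max ((α - a)/t) (min b ((β - a)/t)) ≤ β := by
  have hlo : (α - a)/t ≤ (β - a)/t := by gcongr
  set m := max ((α - a)/t) (min b ((β - a)/t)) with hm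
  have h1 : (α - a)/t ≤ m := le_max_left _ _
  have h2 : m ≤ (β - a)/t := max_le hlo (min_le_right _ _)
  have e1 : α - a ≤ m * t := (div_le_iff₀ ht).mp h1
  have e2 : m * t ≤ β - a := (le_div_iff₀ ht).mp h2
  constructor <;> nlinarith [e1, e2, mul_comm t m]

lemma quot_ge {a b t c : ℝ} (ht : 0 < t) (hc : |c| ≤ 1) :
    (if 0 < a then 1 else if a < 0 then -1 else c) * b ≤ t⁻¹ * (|a + t * b| - |a|) := by
  have h1 : a + t * b ≤ |a + t * b| := le_abs_self _
  have h2 : -(a + t * b) ≤ |a + t * b| := neg_le_abs _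
  split_ifs with h h'
  · rw [abs_of_pos h, inv_mul_eq_div, le_div_iff₀ ht]
    nlinarith
  · rw [abs_of_neg h', inv_mul_eq_div, le_div_iff₀ ht]
    nlinarith
  · have ha : a = 0 := le_antisymm (not_lt.mp h) (not_lt.mp h')
    subst ha
    rw [zero_add, abs_mul, abs_of_pos ht, abs_zero, sub_zero, ← mul_assoc,
      inv_mul_cancel₀ ht.ne', one_mul]
    calc c * b ≤ |c * b| := le_abs_self _
      _ = |c| * |b| := abs_mul _ _
      _ ≤ 1 * |b| := by gcongr
      _ = |b| := one_mul _

lemma quot_abs_le {a b t : ℝ} (ht : 0 < t) : |t⁻¹ * (|a + t * b| - |a|)| ≤ |b| := by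
  rw [abs_mul, abs_inv, abs_of_pos ht]
  have h : |(|a + t * b| - |a|)| ≤ |t * b| := by
    have := abs_abs_sub_abs_le_abs_sub (a + t * b) a
    simpa using this
  calc t⁻¹ * |(|a + t * b| - |a|)| ≤ t⁻¹ * |t * b| := by gcongr
    _ = |b| := by rw [abs_mul, abs_of_pos ht, ← mul_assoc, inv_mul_cancel₀ ht.ne', one_mul]

lemma quot_tendsto {a b : ℝ} {t : ℕ → ℝ} (ht : ∀ k, 0 < t k) (ht0 : Tendsto t atTop (𝓝 0)) :
    Tendsto (fun k => (t k)⁻¹ * (|a + t k * b| - |a|)) atTop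
      (𝓝 (if 0 < a then b else if a < 0 then -b else |b|)) := by
  split_ifs with h h'
  · have hev : ∀ᶠ k in atTop, (t k)⁻¹ * (|a + t k * b| - |a|) = b := by
      have hmul : Tendsto (fun k => t k * |b|) atTop (𝓝 0) := by
        simpa using ht0.mul_const |b|
      filter_upwards [hmul.eventually_lt_const h] with k hk
      have h3 : 0 < a + t k * b := by
        have h4 : |t k * b| < a := by rwa [abs_mul, abs_of_pos (ht k)]
        have := neg_abs_le (t k * b)
        linarith
      rw [abs_of_pos h3, abs_of_pos h, add_sub_cancel_left, inv_mul_cancel_left₀ (ht k).ne']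
    exact Tendsto.congr' (Filter.EventuallyEq.symm hev) tendsto_const_nhds
  · have hev : ∀ᶠ k in atTop, (t k)⁻¹ * (|a + t k * b| - |a|) = -b := by
      have hmul : Tendsto (fun k => t k * |b|) atTop (𝓝 0) := by
        simpa using ht0.mul_const |b|
      filter_upwards [hmul.eventually_lt_const (by linarith : (0:ℝ) < -a)] with k hk
      have h3 : a + t k * b < 0 := by
        have h4 : |t k * b| < -a := by rwa [abs_mul, abs_of_pos (ht k)]
        have := le_abs_self (t k * b)
        linarith
      rw [abs_of_neg h3, abs_of_neg h']
      have he : -(a + t k * b) - -a = t k * -b := by ring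
      rw [he, inv_mul_cancel_left₀ (ht k).ne']
    exact Tendsto.congr' (Filter.EventuallyEq.symm hev) tendsto_const_nhds
  · have ha : a = 0 := le_antisymm (not_lt.mp h) (not_lt.mp h')
    subst ha
    have hev : ∀ k, (t k)⁻¹ * (|0 + t k * b| - |0|) = |b| := fun k => by
      rw [zero_add, abs_mul, abs_of_pos (ht k), abs_zero, sub_zero, ← mul_assoc,
        inv_mul_cancel₀ (ht k).ne', one_mul]
    exact Tendsto.congr (fun k => (hev k).symm) tendsto_const_nhds

/-! ### Measure-theoretic auxiliary lemmas -/

variable {d : ℕ} {Ω : Set (Fin d → ℝ)} {T α β : ℝ}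

lemma omT_finite (hΩb : Bornology.IsBounded Ω) (T : ℝ) :
    IsFiniteMeasure (OmT d Ω T) := by
  constructor
  rw [OmT, Measure.restrict_apply_univ]
  exact ((hΩb.prod (Metric.isBounded_Ioo 0 T))).measure_lt_top

lemma lpInt [IsFiniteMeasure (OmT d Ω T)] (f : Lp ℝ 2 (OmT d Ω T)) :
    Integrable f (OmT d Ω T) :=
  memLp_one_iff_integrable.mp ((Lp.memLp f).mono_exponent (by norm_num))

lemma inner_eq (f g : Lp ℝ 2 (OmT d Ω T)) :
    (inner ℝ f g : ℝ) = ∫ p, f p * g p ∂(OmT d Ω T) := by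
  rw [L2.inner_def]
  refine integral_congr_ae (Eventually.of_forall fun p => ?_)
  simp [RCLike.inner_apply, mul_comm]

lemma integrable_mul' [IsFiniteMeasure (OmT d Ω T)] (f g : Lp ℝ 2 (OmT d Ω T)) :
    Integrable (fun p => f p * g p) (OmT d Ω T) := by
  have := L2.integrable_inner (𝕜 := ℝ) f g
  simpa [RCLike.inner_apply, mul_comm] using this

lemma inner_indicator [IsFiniteMeasure (OmT d Ω T)] {S : Set ((Fin d → ℝ) × ℝ)}
    (hS : MeasurableSet S) (f g : Lp ℝ 2 (OmT d Ω T))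
    (hg : ⇑g =ᵐ[OmT d Ω T] S.indicator fun _ => (1:ℝ)) :
    (inner ℝ f g : ℝ) = ∫ p in S, f p ∂(OmT d Ω T) := by
  rw [inner_eq, ← integral_indicator hS]
  refine integral_congr_ae ?_
  filter_upwards [hg] with p hp
  rw [hp]
  by_cases h : p ∈ S <;>
    simp [Set.indicator_of_mem, Set.indicator_of_notMem, h]

lemma coeFn_add_smul [IsFiniteMeasure (OmT d Ω T)] (ub V : Lp ℝ 2 (OmT d Ω T)) (t : ℝ) :
    ⇑(ub + t • V) =ᵐ[OmT d Ω T] fun p => ub p + t * V p := by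
  filter_upwards [Lp.coeFn_add ub (t • V), Lp.coeFn_smul t V] with p h1 h2
  rw [h1, Pi.add_apply, h2, Pi.smul_apply, smul_eq_mul]

/-- If `ū + tₖ vₖ ∈ Uad` frequently and `vₖ ⇀ v` then `v` is a tangent direction. -/
lemma tangent_of_freq [IsFiniteMeasure (OmT d Ω T)]
    (ub v : Lp ℝ 2 (OmT d Ω T)) (t : ℕ → ℝ) (ht : ∀ k, 0 < t k)
    (vs : ℕ → Lp ℝ 2 (OmT d Ω T)) (hW : WConv d Ω T vs v)
    (hfreq : ∃ᶠ k in atTop, ub + t k • vs k ∈ Uad d Ω T α β) :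
    v ∈ TanCone d Ω T α β ub := by
  by_contra hv
  rw [TanCone, Set.mem_setOf_eq] at hv
  have hbad : (OmT d Ω T) {p | ¬ ((ub p = α → 0 ≤ v p) ∧ (ub p = β → v p ≤ 0))} ≠ 0 := by
    intro h0
    exact hv (ae_iff.mpr h0)
  set S₁ : Set ((Fin d → ℝ) × ℝ) := (⇑ub) ⁻¹' {α} ∩ (⇑v) ⁻¹' (Set.Iio 0) with hS₁def
  set S₂ : Set ((Fin d → ℝ) × ℝ) := (⇑ub) ⁻¹' {β} ∩ (⇑v) ⁻¹' (Set.Ioi 0) with hS₂def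
  have hsub : {p | ¬ ((ub p = α → 0 ≤ v p) ∧ (ub p = β → v p ≤ 0))} ⊆ S₁ ∪ S₂ := by
    intro p hp
    simp only [Set.mem_setOf_eq, not_and_or, Classical.not_imp, not_le] at hp
    rcases hp with h | h
    · exact Or.inl ⟨h.1, h.2⟩
    · exact Or.inr ⟨h.1, h.2⟩
  have hone : (OmT d Ω T) S₁ ≠ 0 ∨ (OmT d Ω T) S₂ ≠ 0 := by
    by_contra hc
    push_neg at hc
    exact hbad (measure_mono_null hsub (measure_union_null hc.1 hc.2))
  rcases hone with h | h
  · have hS : MeasurableSet S₁ :=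
      ((Lp.stronglyMeasurable ub).measurable (measurableSet_singleton α)).inter
        ((Lp.stronglyMeasurable v).measurable measurableSet_Iio)
    set g : Lp ℝ 2 (OmT d Ω T) :=
      (memLp_indicator_const 2 hS (1:ℝ) (Or.inr (measure_ne_top _ _))).toLp _ with hgdef
    have hg : ⇑g =ᵐ[OmT d Ω T] S₁.indicator fun _ => (1:ℝ) := MemLp.coeFn_toLp _
    have hfr : ∃ᶠ k in atTop, 0 ≤ (inner ℝ (vs k) g : ℝ) := by
      refine hfreq.mono fun k hk => ?_
      rw [inner_indicator hS _ _ hg]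
      refine setIntegral_nonneg_of_ae_restrict ?_
      have hae : ∀ᵐ p ∂(OmT d Ω T), α ≤ ub p + t k * vs k p := by
        filter_upwards [hk, coeFn_add_smul ub (vs k) (t k)] with p h1 h2
        rw [← h2]; exact h1.1
      rw [Filter.EventuallyLE, ae_restrict_iff' hS]
      filter_upwards [hae] with p hp hpS
      have hub : ub p = α := hpS.1
      rw [hub] at hp
      have : 0 ≤ t k * vs k p := by linarith
      exact nonneg_of_mul_nonneg_right this (ht k)
    have h5 : 0 ≤ (inner ℝ v g : ℝ) := by
      by_contra hneg
      push_neg at hneg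
      have hev := (hW g).eventually_lt_const hneg
      rcases (hfr.and_eventually hev).exists with ⟨k, hk1, hk2⟩
      exact absurd hk1 (not_le.mpr hk2)
    have h6 : (inner ℝ v g : ℝ) < 0 := by
      rw [inner_indicator hS _ _ hg]
      have hpos : 0 < ∫ p in S₁, (- v p) ∂(OmT d Ω T) := by
        rw [setIntegral_pos_iff_support_of_nonneg_ae
          ((ae_restrict_iff' hS).mpr (Eventually.of_forall fun p hp =>
            neg_nonneg.mpr (le_of_lt hp.2)))
          ((lpInt v).neg.integrableOn)]
        have hsupp : (Function.support fun p => -(v p : ℝ)) ∩ S₁ = S₁ := by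
          refine Set.inter_eq_self_of_subset_right fun p hp => ?_
          have hvp : (v p : ℝ) < 0 := hp.2
          exact neg_ne_zero.mpr (ne_of_lt hvp)
        rw [hsupp]
        exact lt_of_le_of_ne zero_le (Ne.symm h)
      rw [integral_neg] at hpos
      linarith
    linarith
  · have hS : MeasurableSet S₂ :=
      ((Lp.stronglyMeasurable ub).measurable (measurableSet_singleton β)).inter
        ((Lp.stronglyMeasurable v).measurable measurableSet_Ioi)
    set g : Lp ℝ 2 (OmT d Ω T) :=
      (memLp_indicator_const 2 hS (1:ℝ) (Or.inr (measure_ne_top _ _))).toLp _ with hgdef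
    have hg : ⇑g =ᵐ[OmT d Ω T] S₂.indicator fun _ => (1:ℝ) := MemLp.coeFn_toLp _
    have hfr : ∃ᶠ k in atTop, (inner ℝ (vs k) g : ℝ) ≤ 0 := by
      refine hfreq.mono fun k hk => ?_
      rw [inner_indicator hS _ _ hg]
      have h0 : 0 ≤ ∫ p in S₂, (- vs k p) ∂(OmT d Ω T) := by
        refine setIntegral_nonneg_of_ae_restrict ?_
        have hae : ∀ᵐ p ∂(OmT d Ω T), ub p + t k * vs k p ≤ β := by
          filter_upwards [hk, coeFn_add_smul ub (vs k) (t k)] with p h1 h2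
          rw [← h2]; exact h1.2
        rw [Filter.EventuallyLE, ae_restrict_iff' hS]
        filter_upwards [hae] with p hp hpS
        have hub : ub p = β := hpS.1
        rw [hub] at hp
        have hmul : 0 ≤ t k * (- vs k p) := by nlinarith
        exact nonneg_of_mul_nonneg_right hmul (ht k)
      rw [integral_neg] at h0
      linarith
    have h5 : (inner ℝ v g : ℝ) ≤ 0 := by
      by_contra hneg
      push_neg at hneg
      have hev := (hW g).eventually_const_lt hneg
      rcases (hfr.and_eventually hev).exists with ⟨k, hk1, hk2⟩
      exact absurd hk1 (not_le.mpr hk2)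
    have h6 : 0 < (inner ℝ v g : ℝ) := by
      rw [inner_indicator hS _ _ hg]
      rw [setIntegral_pos_iff_support_of_nonneg_ae
        ((ae_restrict_iff' hS).mpr (Eventually.of_forall fun p hp => le_of_lt hp.2))
        ((lpInt v).integrableOn)]
      have hsupp : (Function.support fun p => (v p : ℝ)) ∩ S₂ = S₂ := by
        refine Set.inter_eq_self_of_subset_right fun p hp => ?_
        have hvp : (0:ℝ) < v p := hp.2
        exact ne_of_gt hvp
      rw [hsupp]
      exact lt_of_le_of_ne zero_le (Ne.symm h)
    linarith

/-- The recovery sequence: truncations of `v`. -/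
lemma recovery [IsFiniteMeasure (OmT d Ω T)] (hαβ : α ≤ β)
    (ub v : Lp ℝ 2 (OmT d Ω T)) (hub : ub ∈ Uad d Ω T α β)
    (hv : v ∈ TanCone d Ω T α β ub) :
    ∃ (t : ℕ → ℝ) (V : ℕ → Lp ℝ 2 (OmT d Ω T)),
      (∀ k, 0 < t k) ∧ Tendsto t atTop (𝓝 0) ∧ WConv d Ω T V v ∧
      (∀ k, ub + t k • V k ∈ Uad d Ω T α β) ∧
      Tendsto (fun k => (t k)⁻¹ * (j1 d Ω T (ub + t k • V k) - j1 d Ω T ub)) atTop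
        (𝓝 (j1' d Ω T ub v)) := by
  set t : ℕ → ℝ := fun k => ((k : ℝ) + 1)⁻¹ with htdef
  have ht : ∀ k, 0 < t k := fun k => by positivity
  have ht0 : Tendsto t atTop (𝓝 0) := by
    simpa [htdef, one_div] using tendsto_one_div_add_atTop_nhds_zero_nat (𝕜 := ℝ)
  set w : ℕ → ((Fin d → ℝ) × ℝ) → ℝ :=
    fun k p => max ((α - ub p) / t k) (min (v p) ((β - ub p) / t k)) with hwdef
  have hwm : ∀ k, AEStronglyMeasurable (w k) (OmT d Ω T) := fun k => by
    apply Measurable.aestronglyMeasurable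
    exact ((measurable_const.sub (Lp.stronglyMeasurable ub).measurable).div_const _).max
      (((Lp.stronglyMeasurable v).measurable).min
        ((measurable_const.sub (Lp.stronglyMeasurable ub).measurable).div_const _))
  have hub' : ∀ᵐ p ∂(OmT d Ω T), α ≤ ub p ∧ ub p ≤ β := hub
  have hv' : ∀ᵐ p ∂(OmT d Ω T), (ub p = α → 0 ≤ v p) ∧ (ub p = β → v p ≤ 0) := hv
  have hwb : ∀ k, ∀ᵐ p ∂(OmT d Ω T), |w k p| ≤ |v p| := fun k => by
    filter_upwards [hub'] with p hp
    exact clamp_abs_le (div_nonpos_iff.mpr (Or.inr ⟨by linarith [hp.1], (ht k).le⟩))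
      (div_nonneg (by linarith [hp.2]) (ht k).le)
  have hmemw : ∀ k, MemLp (w k) 2 (OmT d Ω T) := fun k =>
    (Lp.memLp v).of_le (hwm k)
      ((hwb k).mono fun p hp => by simpa [Real.norm_eq_abs] using hp)
  set V : ℕ → Lp ℝ 2 (OmT d Ω T) := fun k => ((hmemw k).toLp (w k)) with hVdef
  have hVco : ∀ k, ⇑(V k) =ᵐ[OmT d Ω T] w k := fun k => MemLp.coeFn_toLp _
  have hsum : ∀ k, ⇑(ub + t k • V k) =ᵐ[OmT d Ω T] fun p => ub p + t k * w k p := fun k => by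
    filter_upwards [coeFn_add_smul ub (V k) (t k), hVco k] with p h1 h2
    rw [h1, h2]
  have hmem : ∀ k, ub + t k • V k ∈ Uad d Ω T α β := fun k => by
    show ∀ᵐ p ∂(OmT d Ω T), _ ∧ _
    filter_upwards [hub', hsum k] with p hp hq
    rw [hq]
    exact clamp_mem (ht k) hαβ hp.1 hp.2
  have hpt : ∀ᵐ p ∂(OmT d Ω T), ∀ᶠ k in atTop, w k p = v p := by
    filter_upwards [hub', hv'] with p hp hq
    have hdiv : ∀ c : ℝ, (fun k : ℕ => c / t k) = fun k : ℕ => c * ((k:ℝ) + 1) := by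
      intro c; funext k; rw [htdef]; simp [div_inv_eq_mul]
    have hnat : Tendsto (fun k : ℕ => ((k:ℝ) + 1)) atTop atTop :=
      tendsto_atTop_add_const_right atTop 1 tendsto_natCast_atTop_atTop
    have hlo : ∀ᶠ k in atTop, (α - ub p) / t k ≤ v p := by
      rcases eq_or_lt_of_le hp.1 with he | hlt
      · refine Eventually.of_forall fun k => ?_
        rw [← he, sub_self, zero_div]
        exact hq.1 he.symm
      · have hb : Tendsto (fun k : ℕ => (α - ub p) / t k) atTop atBot := by
          rw [hdiv]
          exact hnat.const_mul_atTop_of_neg (by linarith)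
        exact hb.eventually_le_atBot _
    have hhi : ∀ᶠ k in atTop, v p ≤ (β - ub p) / t k := by
      rcases eq_or_lt_of_le hp.2 with he | hlt
      · refine Eventually.of_forall fun k => ?_
        rw [he, sub_self, zero_div]
        exact hq.2 he
      · have hb : Tendsto (fun k : ℕ => (β - ub p) / t k) atTop atTop := by
          rw [hdiv]
          exact hnat.const_mul_atTop (by linarith)
        exact hb.eventually_ge_atTop _
    filter_upwards [hlo, hhi] with k h1 h2
    rw [hwdef]
    simp only
    rw [min_eq_left h2, max_eq_right h1]
  have hWC : WConv d Ω T V v := by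
    intro g
    have h1 : ∀ k, (inner ℝ (V k) g : ℝ) = ∫ p, w k p * g p ∂(OmT d Ω T) := fun k => by
      rw [inner_eq]
      exact integral_congr_ae ((hVco k).mono fun p hp => by simp only [hp])
    have h2 : (inner ℝ v g : ℝ) = ∫ p, v p * g p ∂(OmT d Ω T) := inner_eq v g
    simp only [h1, h2]
    refine tendsto_integral_of_dominated_convergence (fun p => |v p * g p|)
      (fun k => (hwm k).mul (Lp.aestronglyMeasurable g)) ((integrable_mul' v g).abs)
      (fun k => ?_) ?_
    · filter_upwards [hwb k] with p hp
      rw [Real.norm_eq_abs, abs_mul, abs_mul]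
      exact mul_le_mul_of_nonneg_right hp (abs_nonneg _)
    · filter_upwards [hpt] with p hp
      exact Tendsto.congr' (hp.mono fun k hk => by simp only [hk]) tendsto_const_nhds
  have hnew : ∀ k, j1 d Ω T (ub + t k • V k) = ∫ p, |ub p + t k * w k p| ∂(OmT d Ω T) :=
    fun k => integral_congr_ae ((hsum k).mono fun p hp => by simp only [hp])
  have hInew : ∀ k, Integrable (fun p => |ub p + t k * w k p|) (OmT d Ω T) := fun k =>
    ((lpInt (ub + t k • V k)).abs).congr ((hsum k).mono fun p hp => by simp only [hp])
  have hrew : ∀ k, (t k)⁻¹ * (j1 d Ω T (ub + t k • V k) - j1 d Ω T ub)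
      = ∫ p, (t k)⁻¹ * (|ub p + t k * w k p| - |ub p|) ∂(OmT d Ω T) := fun k => by
    rw [hnew k, j1, ← integral_sub (hInew k) (lpInt ub).abs, ← integral_const_mul]
  have hj : Tendsto (fun k => (t k)⁻¹ * (j1 d Ω T (ub + t k • V k) - j1 d Ω T ub)) atTop
      (𝓝 (j1' d Ω T ub v)) := by
    simp only [hrew]
    unfold j1'
    refine tendsto_integral_of_dominated_convergence (fun p => |v p|)
      (fun k => ?_) (lpInt v).abs (fun k => ?_) ?_
    · have m1 : AEStronglyMeasurable (fun p => ub p + t k * w k p) (OmT d Ω T) :=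
        (Lp.aestronglyMeasurable ub).add ((hwm k).const_mul (t k))
      exact ((m1.norm.sub (Lp.aestronglyMeasurable ub).norm).const_mul ((t k)⁻¹))
    · filter_upwards [hwb k] with p hp
      rw [Real.norm_eq_abs]
      exact (quot_abs_le (ht k)).trans hp
    · filter_upwards [hpt] with p hp
      exact Tendsto.congr' (hp.mono fun k hk => by simp only [hk]) (quot_tendsto ht ht0)
  exact ⟨t, V, ht, ht0, hWC, hmem, hj⟩

/-- The sign-type function associated to `ū` and `v`, as an element of `L²`. -/
lemma sigma_exists [IsFiniteMeasure (OmT d Ω T)] (ub v : Lp ℝ 2 (OmT d Ω T)) :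
    ∃ σ : Lp ℝ 2 (OmT d Ω T), ⇑σ =ᵐ[OmT d Ω T]
      fun p => if 0 < ub p then (1:ℝ) else if ub p < 0 then -1
        else if 0 ≤ v p then 1 else -1 := by
  set s : ((Fin d → ℝ) × ℝ) → ℝ :=
    fun p => if 0 < ub p then (1:ℝ) else if ub p < 0 then -1
      else if 0 ≤ v p then 1 else -1 with hs
  have hmeas : Measurable s := by
    refine Measurable.ite
      (measurableSet_lt measurable_const (Lp.stronglyMeasurable ub).measurable)
      measurable_const ?_
    refine Measurable.ite
      (measurableSet_lt (Lp.stronglyMeasurable ub).measurable measurable_const)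
      measurable_const ?_
    exact Measurable.ite
      (measurableSet_le measurable_const (Lp.stronglyMeasurable v).measurable)
      measurable_const measurable_const
  have hb : MemLp s 2 (OmT d Ω T) := by
    refine MemLp.of_bound hmeas.aestronglyMeasurable 1 (Eventually.of_forall fun p => ?_)
    simp only [hs, Real.norm_eq_abs]
    split_ifs <;> norm_num
  exact ⟨hb.toLp s, MemLp.coeFn_toLp _⟩

end Stmt15Aux

/-- First subderivatives of the indicator of `Uad` and of `G₁ = δ_{Uad} + μ j₁`. -/
theorem stmt15 (d : ℕ) (Ω : Set (Fin d → ℝ)) (hΩne : Ω.Nonempty) (hΩo : IsOpen Ω)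
    (hΩb : Bornology.IsBounded Ω) (T : ℝ) (hT : 0 < T)
    (α β μ₀ : ℝ) (hα : α < 0) (hβ : 0 < β) (hμ : 0 < μ₀)
    (ub : Lp ℝ 2 (OmT d Ω T)) (hub : ub ∈ Uad d Ω T α β) :
    (∀ v : Lp ℝ 2 (OmT d Ω T),
      (v ∈ TanCone d Ω T α β ub → wfs d Ω T (indUad d Ω T α β) ub v = 0) ∧
      (v ∉ TanCone d Ω T α β ub → wfs d Ω T (indUad d Ω T α β) ub v = ⊤)) ∧
    (∀ v : Lp ℝ 2 (OmT d Ω T),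
      (v ∈ TanCone d Ω T α β ub →
        wfs d Ω T (fun u => indUad d Ω T α β u + ((μ₀ * j1 d Ω T u : ℝ) : EReal)) ub v =
          ((μ₀ * j1' d Ω T ub v : ℝ) : EReal)) ∧
      (v ∉ TanCone d Ω T α β ub →
        wfs d Ω T (fun u => indUad d Ω T α β u + ((μ₀ * j1 d Ω T u : ℝ) : EReal)) ub v = ⊤)) := by
  haveI : IsFiniteMeasure (OmT d Ω T) := Stmt15Aux.omT_finite hΩb T
  have hαβ : α ≤ β := le_trans hα.le hβ.le
  have hEvNot : ∀ (v : Lp ℝ 2 (OmT d Ω T)), v ∉ TanCone d Ω T α β ub →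
      ∀ (t : ℕ → ℝ), (∀ k, 0 < t k) → ∀ (vs : ℕ → Lp ℝ 2 (OmT d Ω T)), WConv d Ω T vs v →
      ∀ᶠ k in atTop, ub + t k • vs k ∉ Uad d Ω T α β := by
    intro v hv t ht vs hW
    by_contra hcon
    rw [Filter.not_eventually] at hcon
    exact hv (Stmt15Aux.tangent_of_freq ub v t ht vs hW (hcon.mono fun k hk => not_not.mp hk))
  constructor
  · intro v
    constructor
    · intro hv
      obtain ⟨t, V, ht, ht0, hWC, hmem, -⟩ := Stmt15Aux.recovery hαβ ub v hub hv
      unfold wfs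
      refine le_antisymm (sInf_le ⟨t, V, ht, ht0, hWC, ?_⟩) (le_sInf ?_)
      · have hterm : (fun k => (((t k)⁻¹ : ℝ) : EReal) *
            (indUad d Ω T α β (ub + t k • V k) - indUad d Ω T α β ub))
            = fun _ => (0 : EReal) := by
          funext k
          simp [indUad, hmem k, hub]
        rw [hterm, liminf_const]
      · rintro L ⟨t, vs, ht, ht0, hW, rfl⟩
        refine le_liminf_of_le (by isBoundedDefault) (Eventually.of_forall fun k => ?_)
        by_cases hk : ub + t k • vs k ∈ Uad d Ω T α β
        · simp [indUad, hk, hub]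
        · simp only [indUad, if_neg hk, if_pos hub, sub_zero,
            EReal.coe_mul_top_of_pos (inv_pos.mpr (ht k))]
          exact le_top
    · intro hv
      unfold wfs
      rw [sInf_eq_top]
      rintro L ⟨t, vs, ht, ht0, hW, rfl⟩
      rw [eq_top_iff]
      refine le_liminf_of_le (by isBoundedDefault) ?_
      filter_upwards [hEvNot v hv t ht vs hW] with k hk
      simp only [indUad, if_neg hk, if_pos hub, sub_zero,
        EReal.coe_mul_top_of_pos (inv_pos.mpr (ht k)), le_refl]
  · intro v
    obtain ⟨σ, hσ⟩ := Stmt15Aux.sigma_exists ub v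
    have hσv : (inner ℝ v σ : ℝ) = j1' d Ω T ub v := by
      rw [Stmt15Aux.inner_eq]
      unfold j1'
      refine integral_congr_ae ?_
      filter_upwards [hσ] with p hp
      rw [hp]
      split_ifs with h1 h2 h3
      · exact mul_one _
      · simp
      · rw [mul_one, abs_of_nonneg h3]
      · rw [abs_of_neg (not_le.mp h3)]; ring
    have hterm_mem : ∀ (u : Lp ℝ 2 (OmT d Ω T)), u ∈ Uad d Ω T α β → ∀ r : ℝ,
        ((r : EReal)) * ((indUad d Ω T α β u + ((μ₀ * j1 d Ω T u : ℝ) : EReal)) -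
          (indUad d Ω T α β ub + ((μ₀ * j1 d Ω T ub : ℝ) : EReal)))
          = ((r * (μ₀ * j1 d Ω T u - μ₀ * j1 d Ω T ub) : ℝ) : EReal) := by
      intro u hu r
      simp only [indUad, if_pos hu, if_pos hub, zero_add]
      rw [← EReal.coe_sub, ← EReal.coe_mul]
    have hterm_nmem : ∀ (u : Lp ℝ 2 (OmT d Ω T)), u ∉ Uad d Ω T α β → ∀ r : ℝ, 0 < r →
        ((r : EReal)) * ((indUad d Ω T α β u + ((μ₀ * j1 d Ω T u : ℝ) : EReal)) -
          (indUad d Ω T α β ub + ((μ₀ * j1 d Ω T ub : ℝ) : EReal))) = ⊤ := by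
      intro u hu r hr
      simp only [indUad, if_neg hu, if_pos hub, zero_add]
      rw [EReal.top_add_coe, EReal.top_sub_coe, EReal.coe_mul_top_of_pos hr]
    have hLB : ∀ (t : ℕ → ℝ), (∀ k, 0 < t k) →
        ∀ (vs : ℕ → Lp ℝ 2 (OmT d Ω T)), WConv d Ω T vs v →
        ((μ₀ * j1' d Ω T ub v : ℝ) : EReal) ≤ liminf (fun k => (((t k)⁻¹ : ℝ) : EReal) *
          ((indUad d Ω T α β (ub + t k • vs k) + ((μ₀ * j1 d Ω T (ub + t k • vs k) : ℝ) : EReal)) -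
            (indUad d Ω T α β ub + ((μ₀ * j1 d Ω T ub : ℝ) : EReal)))) atTop := by
      intro t ht vs hW
      have hlim : Tendsto (fun k => ((μ₀ * (inner ℝ (vs k) σ : ℝ) : ℝ) : EReal)) atTop
          (𝓝 ((μ₀ * j1' d Ω T ub v : ℝ) : EReal)) := by
        rw [← hσv]
        exact EReal.tendsto_coe.mpr ((hW σ).const_mul μ₀)
      calc ((μ₀ * j1' d Ω T ub v : ℝ) : EReal)
          = liminf (fun k => ((μ₀ * (inner ℝ (vs k) σ : ℝ) : ℝ) : EReal)) atTop :=
            (hlim.liminf_eq).symm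
        _ ≤ _ := by
            refine liminf_le_liminf (Eventually.of_forall fun k => ?_)
            by_cases hk : ub + t k • vs k ∈ Uad d Ω T α β
            · rw [hterm_mem _ hk _, EReal.coe_le_coe_iff]
              have hIσ : (inner ℝ (vs k) σ : ℝ) = ∫ p, vs k p * σ p ∂(OmT d Ω T) :=
                Stmt15Aux.inner_eq _ _
              have hq : ∀ᵐ p ∂(OmT d Ω T),
                  vs k p * σ p ≤ (t k)⁻¹ * (|ub p + t k * vs k p| - |ub p|) := by
                filter_upwards [hσ] with p hp
                rw [hp, mul_comm]
                refine Stmt15Aux.quot_ge (ht k) ?_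
                split_ifs <;> norm_num
              have hInew : Integrable (fun p => |ub p + t k * vs k p|) (OmT d Ω T) :=
                ((Stmt15Aux.lpInt (ub + t k • vs k)).abs).congr
                  ((Stmt15Aux.coeFn_add_smul ub (vs k) (t k)).mono fun p hp => by
                    simp only [hp])
              have hqint : Integrable
                  (fun p => (t k)⁻¹ * (|ub p + t k * vs k p| - |ub p|)) (OmT d Ω T) :=
                (hInew.sub (Stmt15Aux.lpInt ub).abs).const_mul _
              have hlint : Integrable (fun p => vs k p * σ p) (OmT d Ω T) :=
                Stmt15Aux.integrable_mul' _ _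
              have hkey : ∫ p, vs k p * σ p ∂(OmT d Ω T)
                  ≤ (t k)⁻¹ * (j1 d Ω T (ub + t k • vs k) - j1 d Ω T ub) := by
                have hnew : j1 d Ω T (ub + t k • vs k)
                    = ∫ p, |ub p + t k * vs k p| ∂(OmT d Ω T) :=
                  integral_congr_ae
                    ((Stmt15Aux.coeFn_add_smul ub (vs k) (t k)).mono fun p hp => by
                      simp only [hp])
                rw [hnew, j1, ← integral_sub hInew (Stmt15Aux.lpInt ub).abs,
                  ← integral_const_mul]
                exact integral_mono_ae hlint hqint hq
              have hring : (t k)⁻¹ * (μ₀ * j1 d Ω T (ub + t k • vs k) - μ₀ * j1 d Ω T ub)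
                  = μ₀ * ((t k)⁻¹ * (j1 d Ω T (ub + t k • vs k) - j1 d Ω T ub)) := by ring
              rw [hring]
              exact mul_le_mul_of_nonneg_left (le_trans (le_of_eq hIσ) hkey) hμ.le
            · rw [hterm_nmem _ hk _ (inv_pos.mpr (ht k))]
              exact le_top
    constructor
    · intro hv
      obtain ⟨t, V, ht, ht0, hWC, hmem, hj⟩ := Stmt15Aux.recovery hαβ ub v hub hv
      unfold wfs
      refine le_antisymm (sInf_le ⟨t, V, ht, ht0, hWC, ?_⟩) (le_sInf ?_)
      · have hreal : Tendsto
            (fun k => (t k)⁻¹ * (μ₀ * j1 d Ω T (ub + t k • V k) - μ₀ * j1 d Ω T ub)) atTop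
            (𝓝 (μ₀ * j1' d Ω T ub v)) := by
          refine (hj.const_mul μ₀).congr fun k => ?_
          ring
        have hT : Tendsto (fun k => (((t k)⁻¹ : ℝ) : EReal) *
            ((indUad d Ω T α β (ub + t k • V k) + ((μ₀ * j1 d Ω T (ub + t k • V k) : ℝ) : EReal)) -
              (indUad d Ω T α β ub + ((μ₀ * j1 d Ω T ub : ℝ) : EReal)))) atTop
            (𝓝 ((μ₀ * j1' d Ω T ub v : ℝ) : EReal)) := by
          have he : ∀ k, (((t k)⁻¹ : ℝ) : EReal) *
              ((indUad d Ω T α β (ub + t k • V k) + ((μ₀ * j1 d Ω T (ub + t k • V k) : ℝ) : EReal)) -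
                (indUad d Ω T α β ub + ((μ₀ * j1 d Ω T ub : ℝ) : EReal)))
              = (((t k)⁻¹ * (μ₀ * j1 d Ω T (ub + t k • V k) - μ₀ * j1 d Ω T ub) : ℝ) : EReal) :=
            fun k => hterm_mem _ (hmem k) _
          simp only [he]
          exact EReal.tendsto_coe.mpr hreal
        exact hT.liminf_eq.symm
      · rintro L ⟨t, vs, ht, ht0, hW, rfl⟩
        exact hLB t ht vs hW
    · intro hv
      unfold wfs
      rw [sInf_eq_top]
      rintro L ⟨t, vs, ht, ht0, hW, rfl⟩
      rw [eq_top_iff]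
      refine le_liminf_of_le (by isBoundedDefault) ?_
      filter_upwards [hEvNot v hv t ht vs hW] with k hk
      rw [hterm_nmem _ hk _ (inv_pos.mpr (ht k))]

end
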